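/- arXiv:1106.3821 — 7 statements merged into one kernel-verified Lean document; each statement's English description precedes it below -/
import Mathlib

section
/- Let M be a module over ℤ (an abelian group), ι an index type, and for each i ∈ ι let α i ∈ M and f i : M →ₗ[ℤ] ℤ be given with f i (α i) = 2; let s i : M ≃ₗ[ℤ] M denote the associated reflection v ↦ v − (f i v) • (α i). Let l be a natural number and c : Fin l → ι a word. Define β : Fin l → M by β k = (s (c 0) ∘ s (c 1) ∘ ⋯ ∘ s (c (k−1))) (α (c k)) (so β 0 = α (c 0)). Then the ℤ-submodule of M generated by {β k : k ∈ Fin l} equals the ℤ-submodule generated by {α (c k) : k ∈ Fin l}. -/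
/-!
Each reflection `s i` moves a vector by a multiple of `α i`, so a product of reflections
`s (c 0) ⋯ s (c (k-1))` moves any vector within the span of `α (c 0), …, α (c (k-1))`.
Hence `β k ≡ α (c k)` modulo the span of the earlier `α (c j)`: the change of generators
from the `α (c k)` to the `β k` is unitriangular, and unitriangular changes preserve spans.
-/

open Submodule

theorem Module.reflection_apply_sub_mem {R M : Type*} [CommRing R] [AddCommGroup M] [Module R M]
    {x : M} {f : Module.Dual R M} (h : f x = 2) {p : Submodule R M} (hx : x ∈ p) (v : M) :
    Module.reflection h v - v ∈ p := by
  rw [Module.reflection_apply, sub_sub_cancel_left]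
  exact neg_mem (smul_mem p _ hx)

theorem LinearEquiv.list_prod_apply_sub_mem {R M : Type*} [Semiring R] [AddCommGroup M]
    [Module R M] {p : Submodule R M} {L : List (M ≃ₗ[R] M)} (hL : ∀ g ∈ L, ∀ v, g v - v ∈ p)
    (v : M) : L.prod v - v ∈ p := by
  induction L with
  | nil => simp
  | cons g L ih =>
    have hg := hL g List.mem_cons_self (L.prod v)
    have hrest := ih (fun g' hg' => hL g' (List.mem_cons_of_mem _ hg'))
    rw [List.prod_cons, LinearEquiv.mul_apply, ← sub_add_sub_cancel _ (L.prod v)]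
    exact add_mem hg hrest

theorem Submodule.span_range_eq_of_sub_mem_span_Iio {R M κ : Type*} [Ring R] [AddCommGroup M]
    [Module R M] [Preorder κ] [WellFoundedLT κ] {a b : κ → M}
    (hab : ∀ k, b k - a k ∈ span R (a '' Set.Iio k)) :
    span R (Set.range b) = span R (Set.range a) := by
  apply le_antisymm
  · rw [span_le]
    rintro _ ⟨k, rfl⟩
    have hIio : span R (a '' Set.Iio k) ≤ span R (Set.range a) :=
      span_mono (Set.image_subset_range _ _)
    rw [SetLike.mem_coe, ← sub_add_cancel (b k) (a k)]
    exact add_mem (hIio (hab k)) (subset_span ⟨k, rfl⟩)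
  · rw [span_le]
    rintro _ ⟨k, rfl⟩
    induction k using WellFoundedLT.induction with
    | _ k ih =>
      have hIio : span R (a '' Set.Iio k) ≤ span R (Set.range b) := by
        rw [span_le]
        rintro _ ⟨j, hj, rfl⟩
        exact ih j hj
      rw [SetLike.mem_coe, ← sub_sub_cancel (b k) (a k)]
      exact sub_mem (subset_span ⟨k, rfl⟩) (hIio (hab k))

/-- Let `α i` be "roots" and `f i` "coroot functionals" with `f i (α i) = 2`, and let
`s i = Module.reflection (hf i)` be the associated reflections of the `ℤ`-module `M`.
For a word `c : Fin l → ι`, define `β k = (s (c 0) ∘ s (c 1) ∘ ⋯ ∘ s (c (k-1))) (α (c k))`.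
Then the `ℤ`-submodule generated by the `β k` equals the `ℤ`-submodule generated by the
`α (c k)`. -/
theorem span_roots_eq_span_simple_roots {M : Type*} [AddCommGroup M] {ι : Type*}
    (α : ι → M) (f : ι → (M →ₗ[ℤ] ℤ)) (hf : ∀ i, f i (α i) = 2)
    (l : ℕ) (c : Fin l → ι) (β : Fin l → M)
    (hβ : ∀ k : Fin l,
      β k = (List.ofFn fun j : Fin k.val =>
          Module.reflection (hf (c ⟨j.val, j.isLt.trans k.isLt⟩))).prod (α (c k))) :
    Submodule.span ℤ (Set.range β) = Submodule.span ℤ (Set.range fun k => α (c k)) := by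
  refine span_range_eq_of_sub_mem_span_Iio fun k => ?_
  rw [hβ k]
  refine LinearEquiv.list_prod_apply_sub_mem (fun g hg => ?_) _
  obtain ⟨j, rfl⟩ := (List.mem_ofFn' _ _).mp hg
  exact Module.reflection_apply_sub_mem _ (subset_span ⟨⟨j, j.isLt.trans k.isLt⟩, j.isLt, rfl⟩)
end

section
/- Let V be a finite-dimensional vector space over ℚ with a basis b : ι → V indexed by a finite type ι, and let w₊, w₋ : V →ₗ[ℚ] V be linear endomorphisms. Set I := {i ∈ ι | w₊ (b i) = b i ∧ w₋ (b i) = b i}, and for J ⊆ ι let L_J denote the ℤ-submodule of V generated by {b i : i ∈ J}. Then: (1) the subgroup ker(w₊ − w₋) ∩ L_ι is the internal direct sum of L_I and the subgroup L̃_red := {μ ∈ L_{ι∖I} | w₊ μ = w₋ μ}; and (2) L̃_red is a free abelian group of rank equal to finrank_ℚ (ker (w₊ − w₋)) − |I|. -/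
/-! The `ℤ`-span `L` of the basis is `L_I ⊕ L_{Iᶜ}` with `L_I ≤ ker (w₊ - w₋)`, so by the modular
law `ker ∩ L = L_I ⊕ (ker ∩ L_{Iᶜ})`. Clearing denominators, `ker ∩ L` spans `ker` over `ℚ`, and a
finitely generated `ℤ`-submodule of a `ℚ`-vector space has `ℤ`-rank equal to the dimension of its
`ℚ`-span; the rank formula follows by adding ranks in the direct sum. -/

open Module Submodule

theorem LinearIndependent.finrank_span_image {R M ι : Type*} [Ring R] [StrongRankCondition R]
    [AddCommGroup M] [Module R M] {v : ι → M} (hv : LinearIndependent R v) (s : Set ι) :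
    finrank R (span R (v '' s)) = s.ncard := by
  rw [finrank, ← Cardinal.toNat_toENat, toENat_rank_span_set (hv.linearIndepOn s), Set.ncard]

theorem Submodule.finrank_sup_eq_of_disjoint {R M : Type*} [CommRing R] [IsDomain R]
    [AddCommGroup M] [Module R M] {s t : Submodule R M} [Module.Finite R s] [Module.Finite R t]
    (h : Disjoint s t) : finrank R (s ⊔ t : Submodule R M) = finrank R s + finrank R t := by
  have hrank := rank_sup_add_rank_inf_eq s t
  rw [h.eq_bot, rank_bot, add_zero] at hrank
  rw [finrank, hrank, Cardinal.toNat_add (rank_lt_aleph0 R s) (rank_lt_aleph0 R t), finrank,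
    finrank]

theorem Submodule.finite_of_le_span {R M : Type*} [CommRing R] [IsNoetherianRing R]
    [AddCommGroup M] [Module R M] {S : Set M} (hS : S.Finite) {N : Submodule R M}
    (hN : N ≤ span R S) : Module.Finite R N :=
  have := Module.Finite.span_of_finite R hS
  have := isNoetherian_of_le hN
  inferInstance

section RatVectorSpace

variable {V : Type*} [AddCommGroup V] [Module ℚ V]

instance Module.IsTorsionFree.int_of_rat : Module.IsTorsionFree ℤ V :=
  .trans_faithfulSMul ℤ ℚ V

theorem exists_zsmul_mem_span_int_of_mem_span_rat {S : Set V} {x : V} (hx : x ∈ span ℚ S) :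
    ∃ d : ℤ, d ≠ 0 ∧ d • x ∈ span ℤ S := by
  induction hx using Submodule.span_induction with
  | mem x hx => exact ⟨1, one_ne_zero, by simpa using subset_span hx⟩
  | zero => exact ⟨1, one_ne_zero, by simp⟩
  | add x y _ _ hx hy =>
    obtain ⟨d, hd, hdx⟩ := hx
    obtain ⟨e, he, hey⟩ := hy
    refine ⟨e * d, mul_ne_zero he hd, ?_⟩
    rw [smul_add, mul_smul, mul_comm, mul_smul]
    exact add_mem (smul_mem _ e hdx) (smul_mem _ d hey)
  | smul q x _ hx =>
    obtain ⟨d, hd, hdx⟩ := hx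
    refine ⟨q.den * d, mul_ne_zero (Int.natCast_ne_zero.mpr q.den_nz) hd, ?_⟩
    have hden : (q.den : ℤ) • q • d • x = q.num • d • x := by
      rw [← Int.cast_smul_eq_zsmul ℚ, ← Int.cast_smul_eq_zsmul ℚ q.num, smul_smul, Int.cast_natCast,
        Rat.den_mul_eq_num]
    rw [mul_smul, smul_comm d q, hden]
    exact smul_mem _ _ hdx

theorem span_rat_restrictScalars_inf_span_int {W : Submodule ℚ V} {S : Set V}
    (hW : W ≤ span ℚ S) :
    span ℚ ((W.restrictScalars ℤ ⊓ span ℤ S : Submodule ℤ V) : Set V) = W := by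
  refine le_antisymm (span_le.mpr fun x hx ↦ hx.1) fun x hx ↦ ?_
  obtain ⟨d, hd, hdx⟩ := exists_zsmul_mem_span_int_of_mem_span_rat (hW hx)
  have hdW : d • x ∈ W.restrictScalars ℤ ⊓ span ℤ S := ⟨W.smul_of_tower_mem d hx, hdx⟩
  have hx' : x = (d : ℚ)⁻¹ • d • x := by
    rw [← Int.cast_smul_eq_zsmul ℚ, smul_smul, inv_mul_cancel₀ (Int.cast_ne_zero.mpr hd), one_smul]
  rw [hx']
  exact smul_mem _ _ (subset_span hdW)

theorem finrank_int_eq_finrank_span_rat (N : Submodule ℤ V) [Module.Finite ℤ N] :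
    finrank ℤ N = finrank ℚ (span ℚ (N : Set V)) := by
  let c := Module.Free.chooseBasis ℤ N
  have hli : LinearIndependent ℚ (N.subtype ∘ c) :=
    (LinearIndependent.iff_fractionRing ℤ ℚ).mp (c.linearIndependent.map' _ N.ker_subtype)
  have hspan : span ℤ (Set.range (N.subtype ∘ c)) = N := by
    rw [Set.range_comp, ← map_span, c.span_eq, Submodule.map_top, range_subtype]
  have hspan_rat : span ℚ (N : Set V) = span ℚ (Set.range (N.subtype ∘ c)) := by
    rw [← span_span_of_tower ℤ ℚ (Set.range _), hspan]
  rw [hspan_rat, finrank_span_eq_card hli, finrank_eq_card_chooseBasisIndex]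

end RatVectorSpace

theorem ker_inter_lattice_direct_sum_and_rank_general {V : Type*} [AddCommGroup V] [Module ℚ V]
    {ι : Type*} [Fintype ι] (b : Module.Basis ι ℚ V)
    (wp wm : V →ₗ[ℚ] V)
    (I : Set ι) (hI : I = {i | wp (b i) = b i ∧ wm (b i) = b i})
    (Lred : Submodule ℤ V)
    (hLred : Lred = Submodule.span ℤ (b '' Iᶜ) ⊓
      (LinearMap.ker (wp - wm)).restrictScalars ℤ) :
    (Submodule.span ℤ (b '' I) ⊓ Lred = ⊥ ∧
      Submodule.span ℤ (b '' I) ⊔ Lred =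
        (LinearMap.ker (wp - wm)).restrictScalars ℤ ⊓ Submodule.span ℤ (Set.range b)) ∧
    Module.Free ℤ Lred ∧
    Module.finrank ℤ Lred = Module.finrank ℚ (LinearMap.ker (wp - wm)) - I.ncard := by
  subst hLred
  set K := (LinearMap.ker (wp - wm)).restrictScalars ℤ
  have hbz : LinearIndependent ℤ b :=
    (LinearIndependent.iff_fractionRing ℤ ℚ).mpr b.linearIndependent
  have hfixed : span ℤ (b '' I) ≤ K := by
    rw [span_le]
    rintro _ ⟨i, hi, rfl⟩
    rw [hI] at hi
    simp [K, hi.1, hi.2]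
  have hlattice : span ℤ (b '' I) ⊔ span ℤ (b '' Iᶜ) = span ℤ (Set.range b) := by
    rw [← span_union, ← Set.image_union, Set.union_compl_self, Set.image_univ]
  have hdisj : Disjoint (span ℤ (b '' I)) (span ℤ (b '' Iᶜ) ⊓ K) :=
    (hbz.disjoint_span_image disjoint_compl_right).mono_right inf_le_left
  have hsup : span ℤ (b '' I) ⊔ span ℤ (b '' Iᶜ) ⊓ K = K ⊓ span ℤ (Set.range b) := by
    rw [← sup_inf_assoc_of_le _ hfixed, hlattice, inf_comm]
  have hfin {N : Submodule ℤ V} : N ≤ span ℤ (Set.range b) → Module.Finite ℤ N :=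
    finite_of_le_span (Set.finite_range b)
  have : Module.Finite ℤ (span ℤ (b '' I)) := hfin (span_mono (Set.image_subset_range b I))
  have : Module.Finite ℤ ↥(span ℤ (b '' Iᶜ) ⊓ K) :=
    hfin (inf_le_left.trans (span_mono (Set.image_subset_range b Iᶜ)))
  have : Module.Finite ℤ ↥(K ⊓ span ℤ (Set.range b)) := hfin inf_le_right
  refine ⟨⟨hdisj.eq_bot, hsup⟩, inferInstance, ?_⟩
  have hrank := finrank_sup_eq_of_disjoint hdisj
  rw [hsup, finrank_int_eq_finrank_span_rat,
    span_rat_restrictScalars_inf_span_int (le_top.trans b.span_eq.ge),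
    hbz.finrank_span_image] at hrank
  omega

/-- Let `V` be a finite-dimensional `ℚ`-vector space with basis `b : ι → V`, `ι` finite, and let
`w₊, w₋ : V →ₗ[ℚ] V`.  Let `I = {i | w₊ (b i) = b i ∧ w₋ (b i) = b i}` and, for `J ⊆ ι`, let
`L_J` be the `ℤ`-submodule generated by `{b i : i ∈ J}`.  Then `ker (w₊ - w₋) ∩ L_ι` is the
internal direct sum of `L_I` and `L̃_red = {μ ∈ L_{ι∖I} | w₊ μ = w₋ μ}`, and `L̃_red` is a free
abelian group of rank `finrank ℚ (ker (w₊ - w₋)) - |I|`. -/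
theorem ker_inter_lattice_direct_sum_and_rank {V : Type*} [AddCommGroup V] [Module ℚ V]
    [FiniteDimensional ℚ V] {ι : Type*} [Fintype ι] (b : Module.Basis ι ℚ V)
    (wp wm : V →ₗ[ℚ] V)
    (I : Set ι) (hI : I = {i | wp (b i) = b i ∧ wm (b i) = b i})
    (Lred : Submodule ℤ V)
    (hLred : Lred = Submodule.span ℤ (b '' Iᶜ) ⊓
      (LinearMap.ker (wp - wm)).restrictScalars ℤ) :
    (Submodule.span ℤ (b '' I) ⊓ Lred = ⊥ ∧
      Submodule.span ℤ (b '' I) ⊔ Lred =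
        (LinearMap.ker (wp - wm)).restrictScalars ℤ ⊓ Submodule.span ℤ (Set.range b)) ∧
    Module.Free ℤ Lred ∧
    Module.finrank ℤ Lred = Module.finrank ℚ (LinearMap.ker (wp - wm)) - I.ncard :=
  ker_inter_lattice_direct_sum_and_rank_general b wp wm I hI Lred hLred
end

section
/- Let V be a finite-dimensional vector space over ℚ with a basis b : ι → V indexed by a finite type ι, and let w : V →ₗ[ℚ] V be a linear endomorphism. Set I := {i ∈ ι | w (b i) = b i}, and for J ⊆ ι let L_J denote the ℤ-submodule of V generated by {b i : i ∈ J}. Then the subgroup K := {μ ∈ L_{ι∖I} | w μ + μ ∈ L_I} of V is a free abelian group of rank equal to finrank_ℚ (ker (w + 1)), where w + 1 denotes the endomorphism v ↦ w v + v. -/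
/-!
Write `T = w + 1`, `U = span ℚ (b '' I)` and `W = span ℚ (b '' Iᶜ)`. Then `V = W ⊕ U` and `T`
acts as `2` on `U`, so projecting onto `W` along `U` identifies `ker T` with `W ⊓ T⁻¹ U`, the
inverse being `y ↦ y - T y / 2`. Every vector of `W ⊓ T⁻¹ U` has a nonzero integer multiple in
`K`, so `K` spans `W ⊓ T⁻¹ U` over `ℚ`; being finitely generated and torsion-free, `K` is free of
rank the dimension of its `ℚ`-span.
-/

open Module Submodule

namespace Submodule

variable {R S V V' : Type*} [CommRing R] [CommRing S] [Algebra R S]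
  [AddCommGroup V] [Module R V] [Module S V] [IsScalarTower R S V]
  [AddCommGroup V'] [Module R V'] [Module S V'] [IsScalarTower R S V']

theorem mem_span_iff_exists_smul_mem {p : Submonoid R} [IsLocalization p S] {M : Submodule R V}
    {x : V} : x ∈ span S (M : Set V) ↔ ∃ s ∈ p, s • x ∈ M := by
  have := isLocalizedModule_id p V S
  rw [← Set.image_id (M : Set V), ← LinearMap.id_coe (R := R), ← localized'_eq_span S p,
    mem_localized']
  constructor
  · rintro ⟨m, hm, s, rfl⟩
    exact ⟨s, s.2, by rwa [← Submonoid.smul_def, IsLocalizedModule.mk'_cancel']⟩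
  · rintro ⟨s, hs, hsx⟩
    exact ⟨s • x, hsx, ⟨s, hs⟩, by rw [IsLocalizedModule.mk'_eq_iff]; rfl⟩

theorem span_inf_comap_eq (p : Submonoid R) [IsLocalization p S] (M : Submodule R V)
    (N : Submodule R V') (f : V →ₗ[S] V') :
    span S ↑(M ⊓ N.comap (f.restrictScalars R)) = span S ↑M ⊓ (span S ↑N).comap f := by
  refine le_antisymm (span_le.mpr fun x hx => ⟨subset_span hx.1, subset_span hx.2⟩) ?_
  rintro x ⟨hxM, hxN⟩
  obtain ⟨s, hs, hsx⟩ := (mem_span_iff_exists_smul_mem (p := p)).mp hxM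
  obtain ⟨t, ht, htx⟩ := (mem_span_iff_exists_smul_mem (p := p)).mp (mem_comap.mp hxN)
  refine mem_span_iff_exists_smul_mem.mpr ⟨t * s, mul_mem ht hs, ?_, ?_⟩
  · rw [mul_smul]
    exact M.smul_mem t hsx
  · rw [SetLike.mem_coe, mem_comap, map_smul, mul_comm, mul_smul]
    exact N.smul_mem s htx

end Submodule

namespace LinearMap

variable {R E : Type*} [CommRing R] [AddCommGroup E] [Module R E] {U W : Submodule R E}
  {T : E →ₗ[R] E} {c : Rˣ}

theorem apply_projection_of_mem_ker (hWU : IsCompl W U) (hT : ∀ u ∈ U, T u = (c : R) • u)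
    {x : E} (hx : x ∈ ker T) :
    T (W.projection U hWU x) = -((c : R) • (x - W.projection U hWU x)) := by
  rw [← hT _ (sub_projection_mem hWU x), map_sub, mem_ker.mp hx, zero_sub, neg_neg]

theorem apply_sub_inv_smul_apply_eq_zero (hT : ∀ u ∈ U, T u = (c : R) • u) {y : E}
    (hy : T y ∈ U) : T (y - ((c⁻¹ : Rˣ) : R) • T y) = 0 := by
  rw [map_sub, map_smul, hT _ hy, smul_smul, Units.inv_mul, one_smul, sub_self]

noncomputable def kerEquivInfComap (hWU : IsCompl W U) (hT : ∀ u ∈ U, T u = (c : R) • u) :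
    ker T ≃ₗ[R] ↥(W ⊓ U.comap T) where
  toFun x := ⟨W.projection U hWU x, mem_inf.mpr ⟨projection_apply_mem hWU x, mem_comap.mpr <| by
    rw [apply_projection_of_mem_ker hWU hT x.2]
    exact neg_mem (U.smul_mem _ (sub_projection_mem hWU x))⟩⟩
  map_add' x y := by ext; simp
  map_smul' r x := by ext; simp
  invFun y := ⟨y - ((c⁻¹ : Rˣ) : R) • T y,
    mem_ker.mpr (apply_sub_inv_smul_apply_eq_zero hT (mem_inf.mp y.2).2)⟩
  left_inv x := Subtype.ext <| show W.projection U hWU x - _ = x by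
    rw [apply_projection_of_mem_ker hWU hT x.2, smul_neg, smul_smul, Units.inv_mul, one_smul,
      sub_neg_eq_add, add_sub_cancel]
  right_inv y := Subtype.ext <| show W.projection U hWU (y - _) = y by
    rw [map_sub, map_smul, projection_apply_of_mem_left hWU (mem_inf.mp y.2).1,
      projection_apply_of_mem_right hWU (mem_inf.mp y.2).2, smul_zero, sub_zero]

end LinearMap

theorem lattice_K_free_of_rank_ker_general {V : Type*} [AddCommGroup V] [Module ℚ V]
    {ι : Type*} [Fintype ι] (b : Module.Basis ι ℚ V)
    (w : V →ₗ[ℚ] V)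
    (I : Set ι) (hI : I = {i | w (b i) = b i})
    (K : Submodule ℤ V)
    (hK : K = Submodule.span ℤ (b '' Iᶜ) ⊓
      Submodule.comap ((w + LinearMap.id).restrictScalars ℤ) (Submodule.span ℤ (b '' I))) :
    Module.Free ℤ K ∧
    Module.finrank ℤ K = Module.finrank ℚ (LinearMap.ker (w + LinearMap.id)) := by
  have : IsTorsionFree ℤ V := .trans_faithfulSMul ℤ ℚ V
  have : Module.Finite ℤ K :=
    Module.Finite.iff_fg.mpr <| (fg_span (Set.toFinite _)).of_le (hK ▸ inf_le_left)
  have hw : Set.EqOn w (LinearMap.id (R := ℚ)) (b '' I) := by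
    rintro _ ⟨i, hi, rfl⟩
    rw [hI] at hi
    exact hi
  have hT : ∀ u ∈ span ℚ (b '' I),
      (w + LinearMap.id : V →ₗ[ℚ] V) u = (Units.mk0 (2 : ℚ) two_ne_zero : ℚ) • u := fun u hu => by
    rw [LinearMap.add_apply, LinearMap.eqOn_span hw hu, Units.val_mk0, two_smul,
      LinearMap.id_apply]
  have hcompl := b.linearIndependent.isCompl_span_image b.span_eq (isCompl_compl (x := I)).symm
  refine ⟨inferInstance, ?_⟩
  rw [← finrank_span_eq_finrank ℚ, hK, span_inf_comap_eq (nonZeroDivisors ℤ), span_span_of_tower,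
    span_span_of_tower]
  exact (LinearMap.kerEquivInfComap hcompl hT).finrank_eq.symm

/-- Let `V` be a finite-dimensional `ℚ`-vector space with basis `b : ι → V`, `ι` finite, and let
`w : V →ₗ[ℚ] V`.  Let `I = {i | w (b i) = b i}` and, for `J ⊆ ι`, let `L_J` be the
`ℤ`-submodule generated by `{b i : i ∈ J}`.  Then the subgroup
`K = {μ ∈ L_{ι∖I} | w μ + μ ∈ L_I}` is a free abelian group of rank
`finrank ℚ (ker (w + 1))`. -/
theorem lattice_K_free_of_rank_ker {V : Type*} [AddCommGroup V] [Module ℚ V]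
    [FiniteDimensional ℚ V] {ι : Type*} [Fintype ι] (b : Module.Basis ι ℚ V)
    (w : V →ₗ[ℚ] V)
    (I : Set ι) (hI : I = {i | w (b i) = b i})
    (K : Submodule ℤ V)
    (hK : K = Submodule.span ℤ (b '' Iᶜ) ⊓
      Submodule.comap ((w + LinearMap.id).restrictScalars ℤ) (Submodule.span ℤ (b '' I))) :
    Module.Free ℤ K ∧
    Module.finrank ℤ K = Module.finrank ℚ (LinearMap.ker (w + LinearMap.id)) :=
  lattice_K_free_of_rank_ker_general b w I hI K hK
end

section
/- Let r be a natural number, P := Fin r → ℤ (a free abelian group of rank r), and let w₊, w₋ : P ≃ₗ[ℤ] P be ℤ-linear automorphisms of P. For a group homomorphism u from the additive group P to the multiplicative group ℂˣ, the following are equivalent: (a) there exists a group homomorphism t : P → ℂˣ such that u(λ) = t(w₋ λ) · (t(w₊ λ))⁻¹ for all λ ∈ P; (b) u(μ) = 1 for every μ ∈ P with w₊ μ = w₋ μ. -/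
/-!
Write `u` additively as a `ℤ`-linear map `U : P → Additive ℂˣ`. Condition (b) says that `U`
vanishes on the kernel of `f := w₋ - w₊`, so `U` factors through `P ⧸ ker f ↪ P`. Since `ℂ` is
algebraically closed, `ℂˣ` is divisible, hence an injective `ℤ`-module, and the factored map
extends along this embedding to the required `t`.
-/

theorem IsAlgClosed.exists_units_pow_eq {K : Type*} [Field K] [IsAlgClosed K] (c : Kˣ) {n : ℕ}
    (hn : n ≠ 0) : ∃ z : Kˣ, z ^ n = c := by
  obtain ⟨z, hz⟩ := IsAlgClosed.exists_pow_nat_eq (c : K) (Nat.pos_of_ne_zero hn)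
  have hz0 : z ≠ 0 := by rintro rfl; exact c.ne_zero (by simpa [hn] using hz.symm)
  exact ⟨Units.mk0 z hz0, Units.ext (by simpa using hz)⟩

theorem IsAlgClosed.exists_units_zpow_eq {K : Type*} [Field K] [IsAlgClosed K] (c : Kˣ) {n : ℤ}
    (hn : n ≠ 0) : ∃ z : Kˣ, z ^ n = c := by
  have hm : n.natAbs ≠ 0 := Int.natAbs_ne_zero.mpr hn
  rcases Int.natAbs_eq n with h | h
  · obtain ⟨z, hz⟩ := exists_units_pow_eq c hm
    exact ⟨z, by rw [h, zpow_natCast, hz]⟩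
  · obtain ⟨z, hz⟩ := exists_units_pow_eq c⁻¹ hm
    exact ⟨z, by rw [h, zpow_neg, zpow_natCast, hz, inv_inv]⟩

noncomputable instance IsAlgClosed.divisibleByIntAdditiveUnits (K : Type*) [Field K]
    [IsAlgClosed K] : DivisibleBy (Additive Kˣ) ℤ :=
  divisibleByOfSMulRightSurj _ _ fun {n} hn c => by
    obtain ⟨z, hz⟩ := exists_units_zpow_eq c.toMul hn
    exact ⟨.ofMul z, show n • _ = c by rw [← ofMul_zpow, hz, ofMul_toMul]⟩

instance IsAlgClosed.injectiveIntAdditiveUnits (K : Type*) [Field K] [IsAlgClosed K] :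
    Module.Injective ℤ (Additive Kˣ) :=
  (Module.Baer.of_divisible _).injective

universe v in
theorem LinearMap.exists_comp_eq_of_ker_le {R M N : Type*} {Q : Type v} [Ring R] [AddCommGroup M]
    [AddCommGroup N] [AddCommGroup Q] [Module R M] [Module R N] [Module R Q] [Small.{v} R]
    [Module.Injective R Q] (f : M →ₗ[R] N) (g : M →ₗ[R] Q) (h : ker f ≤ ker g) :
    ∃ T : N →ₗ[R] Q, T ∘ₗ f = g := by
  obtain ⟨T, hT⟩ := Module.Injective.extension_property R Q _ _ ((ker f).liftQ f le_rfl)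
    (by rw [← ker_eq_bot, Submodule.ker_liftQ_eq_bot _ _ _ le_rfl]) ((ker f).liftQ g h)
  exact ⟨T, by rw [← (ker f).liftQ_mkQ f le_rfl, ← comp_assoc, hT, Submodule.liftQ_mkQ]⟩

/-- Let `P = Fin r → ℤ` and `w₊, w₋` be `ℤ`-linear automorphisms of `P`.  For a group
homomorphism `u` from the additive group `P` to `ℂˣ`, the following are equivalent:
(a) there is a group homomorphism `t : P → ℂˣ` with `u λ = t (w₋ λ) * (t (w₊ λ))⁻¹` for all
`λ ∈ P`;  (b) `u μ = 1` for every `μ` with `w₊ μ = w₋ μ`. -/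
theorem torus_Tw_characterization (r : ℕ)
    (wp wm : (Fin r → ℤ) ≃ₗ[ℤ] (Fin r → ℤ))
    (u : (Fin r → ℤ) → ℂˣ) (hu : ∀ x y, u (x + y) = u x * u y) :
    (∃ t : (Fin r → ℤ) → ℂˣ, (∀ x y, t (x + y) = t x * t y) ∧
      ∀ lam : Fin r → ℤ, u lam = t (wm lam) * (t (wp lam))⁻¹) ↔
    (∀ mu : Fin r → ℤ, wp mu = wm mu → u mu = 1) := by
  refine ⟨fun ⟨t, _, hut⟩ mu hmu => by rw [hut, hmu, mul_inv_cancel], fun hker => ?_⟩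
  let U : (Fin r → ℤ) →ₗ[ℤ] Additive ℂˣ :=
    (AddMonoidHom.mk' (fun x => .ofMul (u x)) hu).toIntLinearMap
  obtain ⟨T, hT⟩ := (wm.toLinearMap - wp.toLinearMap).exists_comp_eq_of_ker_le U fun mu hmu =>
    congrArg Additive.ofMul (hker mu (sub_eq_zero.mp hmu).symm)
  refine ⟨fun x => (T x).toMul, fun x y => by simp, fun lam => ?_⟩
  change (U lam).toMul = _
  simp [← hT, div_eq_mul_inv]
end

section
/- Let l be a natural number, ι a type, and c : Fin l → ι a word. Call a function σ : Fin l → ℕ fiber-constant for c if there exists m : ι → ℕ with σ k = m (c k) for all k ∈ Fin l (equivalently, σ lies in the ℕ-span of the indicator vectors e_j, j in the range of c, where e_j k = 1 if c k = j and e_j k = 0 otherwise). Let Δ(c) be the set of all δ : Fin l → ℕ such that for every j in the range of c there exists k ∈ Fin l with c k = j and δ k = 0. Then every n : Fin l → ℕ can be written in exactly one way as n = σ + δ with σ fiber-constant for c and δ ∈ Δ(c). -/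
/-- Unique decomposition `ℕ^l = Σ(c) ⊕ Δ(c)`: every `n : Fin l → ℕ` is uniquely the sum of a
function which is constant on the fibers of the word `c : Fin l → ι` (i.e. of the form
`k ↦ m (c k)`) and a function `δ` such that for every letter `j` occurring in `c` there is a
position `k` with `c k = j` and `δ k = 0`. -/
theorem unique_decomposition_sigma_delta (l : ℕ) {ι : Type*} (c : Fin l → ι)
    (n : Fin l → ℕ) :
    ∃! p : (Fin l → ℕ) × (Fin l → ℕ),
      (∃ m : ι → ℕ, ∀ k : Fin l, p.1 k = m (c k)) ∧
      (∀ j ∈ Set.range c, ∃ k : Fin l, c k = j ∧ p.2 k = 0) ∧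
      n = p.1 + p.2 := by
  classical
  set m : ι → ℕ := fun j => sInf (n '' {k | c k = j}) with hm
  have hmem : ∀ j ∈ Set.range c, ∃ k, c k = j ∧ n k = m j := by
    intro j hj
    obtain ⟨k, hk⟩ := hj
    have hne : (n '' {k | c k = j}).Nonempty := ⟨n k, k, hk, rfl⟩
    obtain ⟨k', hk', hnk'⟩ := Nat.sInf_mem hne
    exact ⟨k', hk', hnk'⟩
  have hle : ∀ k, m (c k) ≤ n k := fun k => Nat.sInf_le ⟨k, rfl, rfl⟩
  refine ⟨⟨fun k => m (c k), fun k => n k - m (c k)⟩, ⟨⟨m, fun _ => rfl⟩, ?_, ?_⟩, ?_⟩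
  · intro j hj
    obtain ⟨k, hck, hnk⟩ := hmem j hj
    exact ⟨k, hck, by simp [hck, hnk]⟩
  · funext k
    simp [Nat.add_sub_cancel' (hle k)]
  · rintro ⟨σ, δ⟩ ⟨⟨m', hm'⟩, hδ, hsum⟩
    have hn : ∀ k, n k = m' (c k) + δ k := by
      intro k
      have h1 := congrFun hsum k
      simp only [Pi.add_apply] at h1
      rw [show σ k = m' (c k) from hm' k] at h1
      exact h1
    have hkey : ∀ k, m' (c k) = m (c k) := by
      intro k
      have hlb : ∀ x ∈ n '' {k' | c k' = c k}, m' (c k) ≤ x := by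
        rintro x ⟨k', hk', rfl⟩
        rw [hn k']
        simp [show c k' = c k from hk']
      obtain ⟨k', hck', hδk'⟩ := hδ (c k) ⟨k, rfl⟩
      have h0 : δ k' = 0 := hδk'
      have hval : n k' = m' (c k) := by rw [hn k', hck', h0, add_zero]
      have hne : (n '' {k' | c k' = c k}).Nonempty := ⟨n k, k, rfl, rfl⟩
      exact le_antisymm (hlb _ (Nat.sInf_mem hne))
        (le_trans (Nat.sInf_le ⟨k', hck', rfl⟩) (le_of_eq hval))
    have hσ : σ = fun k => m (c k) := funext fun k => (hm' k).trans (hkey k)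
    refine Prod.ext hσ ?_
    funext k
    have := hn k
    simp only [hkey k] at this
    simp [this]
end

section
/- Let K be a field, m a natural number, and R a K-algebra which is a domain, graded by the additive group ℤ^m = (Fin m → ℤ): that is, 𝒜 : (Fin m → ℤ) → Submodule K R is a grading making R a graded algebra (GradedAlgebra 𝒜). If y ∈ R is a normal element, i.e. the sets {y * x : x ∈ R} and {x * y : x ∈ R} coincide, then for every n ∈ ℤ^m the sets {y * a : a ∈ 𝒜 n} and {a * y : a ∈ 𝒜 n} coincide. -/
/-!
Order `ℤ^m` lexicographically. In a graded domain the top component of a product `u * v` sits in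
degree `maxDegree u + maxDegree v`, where it is the nonzero product of the top components of `u`
and `v`; likewise for bottom components. If `b * y = y * a` with `y ≠ 0` and `a ∈ 𝒜 n`, comparing
top and bottom degrees on both sides shows that all components of `b` lie in degree `n`. Since
`y` is normal, every `y * a` can be written as some `b * y` and every `a * y` as some `y * c`.
-/

open scoped Pointwise

namespace DirectSum

variable {ι R σ : Type*} [AddCommMonoid ι] [DecidableEq ι] [Semiring R] [SetLike σ R]
  [AddSubmonoidClass σ R] (𝒜 : ι → σ) [GradedRing 𝒜]
  [∀ (i : ι) (x : 𝒜 i), Decidable (x ≠ 0)]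

theorem support_decompose_mul_subset (u v : R) :
    (decompose 𝒜 (u * v)).support ⊆ (decompose 𝒜 u).support + (decompose 𝒜 v).support := by
  intro k hk
  rw [DFinsupp.mem_support_iff, ne_eq, ← ZeroMemClass.coe_eq_zero, decompose_mul,
    coe_mul_apply] at hk
  obtain ⟨⟨i, j⟩, hij, -⟩ := Finset.exists_ne_zero_of_sum_ne_zero hk
  rw [Finset.mem_filter, Finset.mem_product] at hij
  exact Finset.mem_add.mpr ⟨i, hij.1.1, j, hij.1.2, hij.2⟩

theorem coe_decompose_mul_add_of_unique {u v : R} {i j : ι}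
    (h : ∀ i' ∈ (decompose 𝒜 u).support, ∀ j' ∈ (decompose 𝒜 v).support,
      i' + j' = i + j → i' = i ∧ j' = j) :
    (decompose 𝒜 (u * v) (i + j) : R) = decompose 𝒜 u i * decompose 𝒜 v j := by
  rw [decompose_mul, coe_mul_apply]
  refine (Finset.sum_eq_single (i, j) ?_ ?_).trans rfl
  · rintro ⟨i', j'⟩ hmem hne
    rw [Finset.mem_filter, Finset.mem_product] at hmem
    obtain ⟨rfl, rfl⟩ := h i' hmem.1.1 j' hmem.1.2 hmem.2
    exact absurd rfl hne
  · intro hnot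
    rw [Finset.mem_filter, Finset.mem_product, not_and_or, not_and_or] at hnot
    rcases hnot with (hi | hj) | hij
    · rw [DFinsupp.notMem_support_iff.mp hi, ZeroMemClass.coe_zero, zero_mul]
    · rw [DFinsupp.notMem_support_iff.mp hj, ZeroMemClass.coe_zero, mul_zero]
    · exact absurd rfl hij

variable [LinearOrder ι]

def maxDegree (x : R) : WithBot ι := (decompose 𝒜 x).support.max

theorem maxDegree_zero : maxDegree 𝒜 (0 : R) = ⊥ := by
  simp [maxDegree]

theorem maxDegree_eq_bot {x : R} : maxDegree 𝒜 x = ⊥ ↔ x = 0 := by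
  rw [maxDegree, Finset.max_eq_bot, DFinsupp.support_eq_empty, ← decompose_zero 𝒜,
    (decompose 𝒜).injective.eq_iff]

theorem maxDegree_le_of_mem {a : R} {n : ι} (ha : a ∈ 𝒜 n) : maxDegree 𝒜 a ≤ n := by
  refine Finset.max_le fun i hi => ?_
  by_contra hne
  exact DFinsupp.mem_support_iff.mp hi <|
    Subtype.ext <| decompose_of_mem_ne 𝒜 ha fun h => hne (h ▸ le_rfl)

-- `minDegree 𝒜` is `maxDegree` for the reversed order on the degrees.
def minDegree (x : R) : WithTop ι := (decompose 𝒜 x).support.min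

theorem le_minDegree_of_mem {a : R} {n : ι} (ha : a ∈ 𝒜 n) : n ≤ minDegree 𝒜 a := by
  let : DecidableEq ιᵒᵈ := ‹DecidableEq ι›
  let : GradedRing fun i : ιᵒᵈ => 𝒜 (OrderDual.ofDual i) := ‹GradedRing 𝒜›
  exact maxDegree_le_of_mem (fun i : ιᵒᵈ => 𝒜 (OrderDual.ofDual i)) (n := OrderDual.toDual n) ha

theorem mem_of_maxDegree_le_of_le_minDegree {x : R} {n : ι} (hmax : maxDegree 𝒜 x ≤ n)
    (hmin : n ≤ minDegree 𝒜 x) : x ∈ 𝒜 n := by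
  rw [← sum_support_decompose 𝒜 x]
  refine sum_mem fun i hi => ?_
  obtain rfl : i = n := le_antisymm (WithBot.coe_le_coe.mp ((Finset.le_max hi).trans hmax))
    (WithTop.coe_le_coe.mp (hmin.trans (Finset.min_le hi)))
  exact SetLike.coe_mem _

variable [IsOrderedCancelAddMonoid ι] [NoZeroDivisors R]

theorem maxDegree_mul (u v : R) : maxDegree 𝒜 (u * v) = maxDegree 𝒜 u + maxDegree 𝒜 v := by
  rcases eq_or_ne u 0 with rfl | hu
  · simp [maxDegree_zero]
  rcases eq_or_ne v 0 with rfl | hv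
  · simp [maxDegree_zero]
  obtain ⟨i, hi⟩ := WithBot.ne_bot_iff_exists.mp ((maxDegree_eq_bot 𝒜).not.mpr hu)
  obtain ⟨j, hj⟩ := WithBot.ne_bot_iff_exists.mp ((maxDegree_eq_bot 𝒜).not.mpr hv)
  have le_i {i'} (hi' : i' ∈ (decompose 𝒜 u).support) : i' ≤ i := Finset.le_max_of_eq hi' hi.symm
  have le_j {j'} (hj' : j' ∈ (decompose 𝒜 v).support) : j' ≤ j := Finset.le_max_of_eq hj' hj.symm
  rw [← hi, ← hj, ← WithBot.coe_add]
  refine le_antisymm (Finset.max_le fun k hk => ?_) (Finset.le_max ?_)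
  · obtain ⟨i', hi', j', hj', rfl⟩ := Finset.mem_add.mp (support_decompose_mul_subset 𝒜 u v hk)
    exact WithBot.coe_le_coe.mpr (add_le_add (le_i hi') (le_j hj'))
  · rw [DFinsupp.mem_support_iff, ne_eq, ← ZeroMemClass.coe_eq_zero,
      coe_decompose_mul_add_of_unique 𝒜 fun i' hi' j' hj' =>
        (add_eq_add_iff_eq_and_eq (le_i hi') (le_j hj')).mp]
    exact mul_ne_zero
      (ZeroMemClass.coe_eq_zero.not.mpr (DFinsupp.mem_support_iff.mp (Finset.mem_of_max hi.symm)))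
      (ZeroMemClass.coe_eq_zero.not.mpr (DFinsupp.mem_support_iff.mp (Finset.mem_of_max hj.symm)))

theorem maxDegree_eq_of_mul_eq_mul {y a b : R} (hy : y ≠ 0) (h : b * y = y * a) :
    maxDegree 𝒜 b = maxDegree 𝒜 a := by
  have hy' : maxDegree 𝒜 y ≠ ⊥ := (maxDegree_eq_bot 𝒜).not.mpr hy
  have := congrArg (maxDegree 𝒜) h
  rwa [maxDegree_mul, maxDegree_mul, add_comm (maxDegree 𝒜 y),
    WithBot.add_right_inj hy'] at this

theorem minDegree_eq_of_mul_eq_mul {y a b : R} (hy : y ≠ 0) (h : b * y = y * a) :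
    minDegree 𝒜 b = minDegree 𝒜 a := by
  let : DecidableEq ιᵒᵈ := ‹DecidableEq ι›
  let : GradedRing fun i : ιᵒᵈ => 𝒜 (OrderDual.ofDual i) := ‹GradedRing 𝒜›
  exact maxDegree_eq_of_mul_eq_mul (fun i : ιᵒᵈ => 𝒜 (OrderDual.ofDual i)) hy h

theorem mem_of_mul_eq_mul {y a b : R} {n : ι} (hy : y ≠ 0) (ha : a ∈ 𝒜 n)
    (h : b * y = y * a) : b ∈ 𝒜 n :=
  mem_of_maxDegree_le_of_le_minDegree 𝒜
    ((maxDegree_eq_of_mul_eq_mul 𝒜 hy h).trans_le (maxDegree_le_of_mem 𝒜 ha))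
    ((le_minDegree_of_mem 𝒜 ha).trans_eq (minDegree_eq_of_mul_eq_mul 𝒜 hy h).symm)

theorem mem_of_mul_eq_mul' {y a c : R} {n : ι} (hy : y ≠ 0) (ha : a ∈ 𝒜 n)
    (h : y * c = a * y) : c ∈ 𝒜 n :=
  mem_of_maxDegree_le_of_le_minDegree 𝒜
    ((maxDegree_eq_of_mul_eq_mul 𝒜 hy h.symm).symm.trans_le (maxDegree_le_of_mem 𝒜 ha))
    ((le_minDegree_of_mem 𝒜 ha).trans_eq (minDegree_eq_of_mul_eq_mul 𝒜 hy h.symm))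

end DirectSum

/-- In a `ℤ^m`-graded `K`-algebra `R` which is a domain, a normal element `y` (i.e.
`y R = R y`) satisfies `y · 𝒜 n = 𝒜 n · y` for every homogeneous component `𝒜 n`. -/
theorem normal_element_graded_components {K R : Type*} [Field K] [Ring R] [IsDomain R]
    [Algebra K R] (m : ℕ) (𝒜 : (Fin m → ℤ) → Submodule K R) [GradedAlgebra 𝒜]
    (y : R)
    (hy : {z : R | ∃ x : R, z = y * x} = {z : R | ∃ x : R, z = x * y}) :
    ∀ n : Fin m → ℤ,
      {z : R | ∃ a ∈ 𝒜 n, z = y * a} = {z : R | ∃ a ∈ 𝒜 n, z = a * y} := by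
  classical
  intro n
  rcases eq_or_ne y 0 with rfl | hy0
  · simp
  let ℬ : Lex (Fin m → ℤ) → Submodule K R := fun i => 𝒜 (ofLex i)
  let : GradedRing ℬ := ‹GradedAlgebra 𝒜›
  ext z
  constructor
  · rintro ⟨a, ha, rfl⟩
    obtain ⟨b, hb⟩ : y * a ∈ {z : R | ∃ x : R, z = x * y} := hy ▸ ⟨a, rfl⟩
    exact ⟨b, DirectSum.mem_of_mul_eq_mul ℬ (n := toLex n) hy0 ha hb.symm, hb⟩
  · rintro ⟨a, ha, rfl⟩
    obtain ⟨c, hc⟩ : a * y ∈ {z : R | ∃ x : R, z = y * x} := hy ▸ ⟨a, rfl⟩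
    exact ⟨c, DirectSum.mem_of_mul_eq_mul' ℬ (n := toLex n) hy0 ha hc.symm, hc⟩
end

section
/- Let K be a field, m a natural number, and R a K-algebra which is a domain, graded by the additive group ℤ^m = (Fin m → ℤ): that is, 𝒜 : (Fin m → ℤ) → Submodule K R is a grading making R a graded algebra (GradedAlgebra 𝒜). Let y ∈ R be a normal element, i.e. the sets {y * x : x ∈ R} and {x * y : x ∈ R} coincide, and for n ∈ ℤ^m let y_n ∈ 𝒜 n denote the degree-n homogeneous component of y. Then every y_n is a normal element of R, and there exists a ring automorphism φ : R ≃+* R which is graded (φ maps 𝒜 k onto 𝒜 k for every k ∈ ℤ^m) such that y_n * x = φ(x) * y_n for all n ∈ ℤ^m and all x ∈ R; in particular y * x = φ(x) * y for all x ∈ R. -/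
/-!
Order `ℤ^m` lexicographically. In a domain the leading homogeneous component of a product is the
product of the leading components, and likewise for the trailing ones; so if `y ≠ 0` and
`y * u = v * y`, then `u` and `v` have the same leading and the same trailing degree, hence `u` is
homogeneous of degree `d` iff `v` is. Since `y` is normal and `R` is a domain, `y * x = φ x * y`
for a ring automorphism `φ`, which is therefore graded. For `x` homogeneous of degree `k`, the
degree `n + k` component of `y * x = φ x * y` reads `y_n * x = φ x * y_n`, and this extends to
all `x` by additivity; the surjectivity of `φ` then makes each `y_n` normal.
-/

open DirectSum

section LeadingDegree

variable {ι R σ Γ : Type*} [DecidableEq ι] [AddMonoid ι] [Semiring R] [SetLike σ R]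
  [AddSubmonoidClass σ R] (𝒜 : ι → σ) [GradedRing 𝒜] [LinearOrder Γ] (D : ι → Γ)

def IsLeadingDegree (a : R) (d : ι) : Prop :=
  decompose 𝒜 a d ≠ 0 ∧ ∀ n, decompose 𝒜 a n ≠ 0 → D n ≤ D d

variable {𝒜 D}

theorem exists_isLeadingDegree {a : R} (ha : a ≠ 0) : ∃ d, IsLeadingDegree 𝒜 D a d := by
  classical
  have hsupp : (decompose 𝒜 a).support.Nonempty :=
    Finset.nonempty_iff_ne_empty.2 <|
      DFinsupp.support_eq_empty.not.2 <| (decomposeAddEquiv 𝒜).map_ne_zero_iff.2 ha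
  obtain ⟨d, hd, hmax⟩ := (decompose 𝒜 a).support.exists_max_image D hsupp
  exact ⟨d, DFinsupp.mem_support_iff.1 hd, fun n hn => hmax n (DFinsupp.mem_support_iff.2 hn)⟩

theorem isLeadingDegree_of_mem {a : R} {d : ι} (ha : a ∈ 𝒜 d) (h0 : a ≠ 0) :
    IsLeadingDegree 𝒜 D a d := by
  have hd : ∀ n, decompose 𝒜 a n ≠ 0 → n = d := fun n hn => by
    by_contra hnd
    exact hn (ZeroMemClass.coe_eq_zero.1 (decompose_of_mem_ne 𝒜 ha (Ne.symm hnd)))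
  refine ⟨fun h => h0 ?_, fun n hn => (congrArg D (hd n hn)).le⟩
  rw [← decompose_of_mem_same 𝒜 ha, h, ZeroMemClass.coe_zero]

theorem IsLeadingDegree.unique (hD : Function.Injective D) {a : R} {d d' : ι}
    (h : IsLeadingDegree 𝒜 D a d) (h' : IsLeadingDegree 𝒜 D a d') : d = d' :=
  hD ((h'.2 d h.1).antisymm (h.2 d' h'.1))

theorem mem_iff_isLeadingDegree_and_isLeadingDegree_toDual (hD : Function.Injective D)
    {a : R} (ha : a ≠ 0) {d : ι} :
    a ∈ 𝒜 d ↔ IsLeadingDegree 𝒜 D a d ∧ IsLeadingDegree 𝒜 (OrderDual.toDual ∘ D) a d := by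
  classical
  refine ⟨fun h => ⟨isLeadingDegree_of_mem h ha, isLeadingDegree_of_mem h ha⟩,
    fun ⟨hmax, hmin⟩ => ?_⟩
  rw [← sum_support_decompose 𝒜 a]
  refine sum_mem fun i hi => ?_
  have hi' := DFinsupp.mem_support_iff.1 hi
  obtain rfl : i = d := hD ((hmax.2 i hi').antisymm (hmin.2 i hi'))
  exact (decompose 𝒜 a i).2

variable [AddCommMonoid Γ] [IsOrderedCancelAddMonoid Γ]

theorem IsLeadingDegree.coe_decompose_mul_add (hadd : ∀ i j, D (i + j) = D i + D j)
    (hD : Function.Injective D) {a b : R} {d e : ι}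
    (ha : IsLeadingDegree 𝒜 D a d) (hb : IsLeadingDegree 𝒜 D b e) :
    (decompose 𝒜 (a * b) (d + e) : R) = decompose 𝒜 a d * decompose 𝒜 b e := by
  classical
  rw [decompose_mul, coe_mul_apply, Finset.sum_eq_single_of_mem (d, e)]
  · simpa [DFinsupp.mem_support_iff] using ⟨ha.1, hb.1⟩
  rintro ⟨i, j⟩ hij hne
  simp only [Finset.mem_filter, Finset.mem_product, DFinsupp.mem_support_iff] at hij
  obtain ⟨⟨hi, hj⟩, hsum⟩ := hij
  have hdeg := (add_eq_add_iff_eq_and_eq (ha.2 i hi) (hb.2 j hj)).1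
    (by rw [← hadd, ← hadd, hsum])
  exact absurd (Prod.ext (hD hdeg.1) (hD hdeg.2)) hne

theorem IsLeadingDegree.mul [NoZeroDivisors R] (hadd : ∀ i j, D (i + j) = D i + D j)
    (hD : Function.Injective D) {a b : R} {d e : ι}
    (ha : IsLeadingDegree 𝒜 D a d) (hb : IsLeadingDegree 𝒜 D b e) :
    IsLeadingDegree 𝒜 D (a * b) (d + e) := by
  classical
  refine ⟨fun h => ?_, fun n hn => ?_⟩
  · have hprod := ha.coe_decompose_mul_add hadd hD hb
    rw [h, ZeroMemClass.coe_zero] at hprod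
    exact mul_ne_zero (fun h => ha.1 (Subtype.ext h)) (fun h => hb.1 (Subtype.ext h)) hprod.symm
  · have hn' : (decompose 𝒜 (a * b) n : R) ≠ 0 := fun h => hn (Subtype.ext h)
    rw [decompose_mul, coe_mul_apply] at hn'
    obtain ⟨⟨i, j⟩, hij, -⟩ := Finset.exists_ne_zero_of_sum_ne_zero hn'
    simp only [Finset.mem_filter, Finset.mem_product, DFinsupp.mem_support_iff] at hij
    obtain ⟨⟨hi, hj⟩, rfl⟩ := hij
    rw [hadd, hadd]
    exact add_le_add (ha.2 i hi) (hb.2 j hj)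

theorem isLeadingDegree_iff_of_mul_eq_mul [NoZeroDivisors R]
    (hadd : ∀ i j, D (i + j) = D i + D j) (hD : Function.Injective D) {y u v : R}
    (hy : y ≠ 0) (hu : u ≠ 0) (h : y * u = v * y) {d : ι} :
    IsLeadingDegree 𝒜 D u d ↔ IsLeadingDegree 𝒜 D v d := by
  have hv : v ≠ 0 := by rintro rfl; exact mul_ne_zero hy hu (h.trans (zero_mul y))
  obtain ⟨p, hp⟩ := exists_isLeadingDegree (𝒜 := 𝒜) (D := D) hy
  obtain ⟨a, ha⟩ := exists_isLeadingDegree (𝒜 := 𝒜) (D := D) hu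
  obtain ⟨b, hb⟩ := exists_isLeadingDegree (𝒜 := 𝒜) (D := D) hv
  have hpab : p + a = b + p := (h ▸ hp.mul hadd hD ha).unique hD (hb.mul hadd hD hp)
  obtain rfl : a = b := hD (add_left_cancel (by rw [← hadd, hpab, hadd, add_comm]))
  exact ⟨fun hd => hd.unique hD ha ▸ hb, fun hd => hd.unique hD hb ▸ ha⟩

theorem mem_iff_of_mul_eq_mul [NoZeroDivisors R]
    (hadd : ∀ i j, D (i + j) = D i + D j) (hD : Function.Injective D) {y u v : R}
    (hy : y ≠ 0) (h : y * u = v * y) {d : ι} : u ∈ 𝒜 d ↔ v ∈ 𝒜 d := by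
  rcases eq_or_ne u 0 with rfl | hu
  · obtain rfl : v = 0 := by simpa [hy] using h.symm
    simp only [zero_mem]
  have hv : v ≠ 0 := by rintro rfl; exact mul_ne_zero hy hu (h.trans (zero_mul y))
  have hD' : Function.Injective (OrderDual.toDual ∘ D) := OrderDual.toDual.injective.comp hD
  rw [mem_iff_isLeadingDegree_and_isLeadingDegree_toDual hD hu,
    mem_iff_isLeadingDegree_and_isLeadingDegree_toDual hD hv,
    isLeadingDegree_iff_of_mul_eq_mul hadd hD hy hu h,
    isLeadingDegree_iff_of_mul_eq_mul (D := OrderDual.toDual ∘ D) hadd hD' hy hu h]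

end LeadingDegree

def IsNormalElement {R : Type*} [Mul R] (y : R) : Prop :=
  {z : R | ∃ x, z = y * x} = {z : R | ∃ x, z = x * y}

theorem isNormalElement_of_surjective_of_mul_eq {R : Type*} [Mul R] {a : R} {f : R → R}
    (hf : Function.Surjective f) (h : ∀ x, a * x = f x * a) : IsNormalElement a := by
  ext z
  constructor
  · rintro ⟨x, rfl⟩
    exact ⟨f x, h x⟩
  · rintro ⟨x, rfl⟩
    obtain ⟨x', rfl⟩ := hf x
    exact ⟨x', (h x').symm⟩

theorem IsNormalElement.exists_ringEquiv_mul_eq {R : Type*} [Ring R] [NoZeroDivisors R] {y : R}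
    (hy : IsNormalElement y) (hy0 : y ≠ 0) : ∃ φ : R ≃+* R, ∀ x, y * x = φ x * y := by
  have htwist : ∀ x, ∃ w, y * x = w * y := fun x =>
    (hy ▸ ⟨x, rfl⟩ : y * x ∈ {z | ∃ x, z = x * y})
  choose f hf using htwist
  have hunique : ∀ x w, y * x = w * y → f x = w := fun x w h =>
    mul_right_cancel₀ hy0 ((hf x).symm.trans h)
  have hinj : Function.Injective f := fun a b hab => mul_left_cancel₀ hy0 (by rw [hf, hf, hab])
  have hsurj : Function.Surjective f := fun w => by
    obtain ⟨x, hx⟩ : w * y ∈ {z | ∃ x, z = y * x} := hy.symm ▸ ⟨w, rfl⟩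
    exact ⟨x, hunique x w hx.symm⟩
  let φ : R →+* R :=
    { toFun := f
      map_one' := hunique 1 1 (by rw [mul_one, one_mul])
      map_mul' := fun a b => hunique _ _ (by rw [← mul_assoc, hf a, mul_assoc, hf b, mul_assoc])
      map_zero' := hunique 0 0 (by rw [mul_zero, zero_mul])
      map_add' := fun a b => hunique _ _ (by rw [mul_add, hf a, hf b, add_mul]) }
  exact ⟨RingEquiv.ofBijective φ ⟨hinj, hsurj⟩, hf⟩

theorem IsNormalElement.exists_ringEquiv_image_eq_and_mul_eq {ι R σ Γ : Type*} [DecidableEq ι]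
    [AddMonoid ι] [Ring R] [NoZeroDivisors R] [SetLike σ R] [AddSubmonoidClass σ R]
    {𝒜 : ι → σ} [GradedRing 𝒜] [AddCommMonoid Γ] [LinearOrder Γ] [IsOrderedCancelAddMonoid Γ]
    {D : ι → Γ} (hadd : ∀ i j, D (i + j) = D i + D j) (hD : Function.Injective D) {y : R}
    (hy : IsNormalElement y) :
    ∃ φ : R ≃+* R, (∀ k, φ '' (𝒜 k : Set R) = 𝒜 k) ∧ ∀ x, y * x = φ x * y := by
  rcases eq_or_ne y 0 with rfl | hy0
  · exact ⟨RingEquiv.refl R, fun k => Set.image_id _, by simp⟩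
  obtain ⟨φ, hφ⟩ := hy.exists_ringEquiv_mul_eq hy0
  refine ⟨φ, fun k => Set.ext fun w => ?_, hφ⟩
  obtain ⟨x, rfl⟩ := φ.surjective w
  rw [φ.injective.mem_set_image]
  exact mem_iff_of_mul_eq_mul hadd hD hy0 (hφ x)

theorem coe_decompose_mul_eq_map_mul {ι R σ F : Type*} [DecidableEq ι] [AddCancelCommMonoid ι]
    [Semiring R] [SetLike σ R] [AddSubmonoidClass σ R] (𝒜 : ι → σ) [GradedRing 𝒜]
    [FunLike F R R] [AddMonoidHomClass F R R] {φ : F} (hφ : ∀ k x, x ∈ 𝒜 k → φ x ∈ 𝒜 k)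
    {y : R} (h : ∀ x, y * x = φ x * y) (n : ι) (x : R) :
    (decompose 𝒜 y n : R) * x = φ x * decompose 𝒜 y n := by
  induction x using DirectSum.Decomposition.inductionOn 𝒜 with
  | zero => simp
  | homogeneous x =>
    rw [← coe_decompose_mul_add_of_right_mem 𝒜 x.2, h,
      ← coe_decompose_mul_add_of_left_mem 𝒜 (hφ _ _ x.2), add_comm]
  | add a b ha hb => rw [mul_add, ha, hb, map_add, add_mul]

/-- In a `ℤ^m`-graded `K`-algebra `R` which is a domain, if `y` is a normal element
(`y R = R y`) with homogeneous components `y_n = (DirectSum.decompose 𝒜 y) n`, then every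
`y_n` is normal, and there is a graded ring automorphism `φ` of `R` such that
`y_n * x = φ x * y_n` for all `n` and all `x`; in particular `y * x = φ x * y` for all `x`. -/
theorem normal_element_components_normal_with_graded_automorphism {K R : Type*} [Field K]
    [Ring R] [IsDomain R] [Algebra K R] (m : ℕ) (𝒜 : (Fin m → ℤ) → Submodule K R)
    [GradedAlgebra 𝒜] (y : R)
    (hy : {z : R | ∃ x : R, z = y * x} = {z : R | ∃ x : R, z = x * y}) :
    (∀ n : Fin m → ℤ,
      {z : R | ∃ x : R, z = (DirectSum.decompose 𝒜 y n : R) * x} =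
        {z : R | ∃ x : R, z = x * (DirectSum.decompose 𝒜 y n : R)}) ∧
    ∃ φ : R ≃+* R,
      (∀ k : Fin m → ℤ, φ '' (𝒜 k : Set R) = (𝒜 k : Set R)) ∧
      (∀ (n : Fin m → ℤ) (x : R),
        (DirectSum.decompose 𝒜 y n : R) * x = φ x * (DirectSum.decompose 𝒜 y n : R)) ∧
      (∀ x : R, y * x = φ x * y) := by
  obtain ⟨φ, hφ𝒜, hφ⟩ := IsNormalElement.exists_ringEquiv_image_eq_and_mul_eq (𝒜 := 𝒜)
    (D := toLex) (fun _ _ => toLex_add _ _) toLex.injective hy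
  have hcomp := coe_decompose_mul_eq_map_mul 𝒜 (fun k x hx => (hφ𝒜 k).subset ⟨x, hx, rfl⟩) hφ
  exact ⟨fun n => isNormalElement_of_surjective_of_mul_eq φ.surjective (hcomp n), φ, hφ𝒜,
    hcomp, hφ⟩
end
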